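/- arXiv:2501.13244 — 3 statements merged into one kernel-verified Lean document; each statement's English description precedes it below -/
import Mathlib

section
/- With the Lyapunov function V and constants a, b, c, δ, m = a/b² + c = δ/2 as above, and hybrid jump map g(q, p, τ) = (q, 0, T₀), for all (q, p) and τ = T the jump change satisfies V(q, 0, T₀) − V(q, p, T) = −(δ/2)T²|p|² − (2aT/b)⟨q − x*, p⟩ − δ(T² − T₀²)(J(q) − J(x*)). Moreover, if J is κ_J-strongly convex and Γ := √((T² − T₀²)κ_J) > 2η, then V(q, 0, T₀) − V(q, p, T) ≤ −ν₁|p|² − ν₂|q − x*|² with ν₁ = 1 − 2η/Γ > 0 and ν₂ = Γ(Γ − 2η)/T² > 0. -/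
open RealInnerProductSpace

theorem stmt_12 (n : ℕ) (J : EuclideanSpace ℝ (Fin n) → ℝ)
    (xstar : EuclideanSpace ℝ (Fin n))
    (κJ η T₀ T : ℝ) (hκ : 0 < κJ)
    (hη : η ∈ Set.Ioo (0 : ℝ) 1) (hT₀ : 0 < T₀) (hT : T₀ < T)
    (hlow : ∀ q, (κJ / 2) * ‖q - xstar‖ ^ 2 ≤ J q - J xstar) :
    let b : ℝ := 3 - η
    let a : ℝ := 2 * η * b / T ^ 2
    let c : ℝ := 3 * a * (1 - η) / (2 * η * b ^ 2)
    let δ : ℝ := a / (η * b)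
    let V : EuclideanSpace ℝ (Fin n) → EuclideanSpace ℝ (Fin n) → ℝ → ℝ :=
      fun q p τ => a * ‖q + (τ / b) • p - xstar‖ ^ 2 + c * τ ^ 2 * ‖p‖ ^ 2
        + δ * τ ^ 2 * (J q - J xstar)
    let Γ : ℝ := Real.sqrt ((T ^ 2 - T₀ ^ 2) * κJ)
    (∀ q p : EuclideanSpace ℝ (Fin n),
      V q 0 T₀ - V q p T =
        -(δ / 2) * T ^ 2 * ‖p‖ ^ 2 - (2 * a * T / b) * ⟪q - xstar, p⟫
          - δ * (T ^ 2 - T₀ ^ 2) * (J q - J xstar)) ∧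
    (2 * η < Γ →
      let ν₁ : ℝ := 1 - 2 * η / Γ
      let ν₂ : ℝ := Γ * (Γ - 2 * η) / T ^ 2
      0 < ν₁ ∧ 0 < ν₂ ∧
      ∀ q p : EuclideanSpace ℝ (Fin n),
        V q 0 T₀ - V q p T ≤ -ν₁ * ‖p‖ ^ 2 - ν₂ * ‖q - xstar‖ ^ 2) := by
  intro b a c δ V Γ
  obtain ⟨hη0, hη1⟩ := hη
  have hb : b = 3 - η := rfl
  have ha : a = 2 * η * b / T ^ 2 := rfl
  have hc : c = 3 * a * (1 - η) / (2 * η * b ^ 2) := rfl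
  have hδ : δ = a / (η * b) := rfl
  have hΓdef : Γ = Real.sqrt ((T ^ 2 - T₀ ^ 2) * κJ) := rfl
  have hVdef : V = fun q p τ => a * ‖q + (τ / b) • p - xstar‖ ^ 2 + c * τ ^ 2 * ‖p‖ ^ 2
        + δ * τ ^ 2 * (J q - J xstar) := rfl
  clear_value b a c δ Γ V
  have hTpos : (0:ℝ) < T := hT₀.trans hT
  have hTne : T ≠ 0 := ne_of_gt hTpos
  have hbpos : (0:ℝ) < b := by rw [hb]; linarith
  have hbne : b ≠ 0 := ne_of_gt hbpos
  have hT2 : (0:ℝ) < T ^ 2 - T₀ ^ 2 := by nlinarith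
  have hΓsq : Γ ^ 2 = (T ^ 2 - T₀ ^ 2) * κJ := by
    rw [hΓdef]
    exact Real.sq_sqrt (le_of_lt (mul_pos hT2 hκ))
  have hδ2 : δ = 2 / T ^ 2 := by
    rw [hδ, ha]
    field_simp
  have hm : a / b ^ 2 + c = δ / 2 := by
    rw [hc, hδ, ha, hb]
    have h3 : (3:ℝ) - η ≠ 0 := by linarith
    field_simp
    ring
  have key : ∀ q p : EuclideanSpace ℝ (Fin n),
      V q 0 T₀ - V q p T =
        -(δ / 2) * T ^ 2 * ‖p‖ ^ 2 - (2 * a * T / b) * ⟪q - xstar, p⟫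
          - δ * (T ^ 2 - T₀ ^ 2) * (J q - J xstar) := by
    intro q p
    have hsplit : q + (T / b) • p - xstar = (q - xstar) + (T / b) • p := by
      abel
    have hexp : ‖q + (T / b) • p - xstar‖ ^ 2
        = ‖q - xstar‖ ^ 2 + 2 * (T / b) * ⟪q - xstar, p⟫ + (T / b) ^ 2 * ‖p‖ ^ 2 := by
      rw [hsplit, norm_add_sq_real, real_inner_smul_right, norm_smul, Real.norm_eq_abs,
        mul_pow, sq_abs]
      ring
    rw [hVdef]
    simp only [smul_zero, add_zero, norm_zero]
    rw [hexp]
    have hthis : a * (T / b) ^ 2 + c * T ^ 2 = δ / 2 * T ^ 2 := by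
      linear_combination T ^ 2 * hm
    linear_combination (-‖p‖ ^ 2) * hthis
  refine ⟨key, ?_⟩
  intro hΓ ν₁ ν₂
  have hν₁ : ν₁ = 1 - 2 * η / Γ := rfl
  have hν₂ : ν₂ = Γ * (Γ - 2 * η) / T ^ 2 := rfl
  clear_value ν₁ ν₂
  have hΓpos : 0 < Γ := lt_trans (by linarith) hΓ
  have hΓne : Γ ≠ 0 := ne_of_gt hΓpos
  have hab : 2 * a * T / b = 4 * η / T := by
    rw [ha]; field_simp; ring
  refine ⟨by rw [hν₁, sub_pos, div_lt_one hΓpos]; exact hΓ,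
    by rw [hν₂]
       have : 0 < Γ - 2 * η := by linarith
       positivity, ?_⟩
  intro q p
  rw [key q p, hν₁, hν₂, hab]
  set s := ‖q - xstar‖ with hs
  set t := ‖p‖ with ht
  have habs : |⟪q - xstar, p⟫| ≤ s * t := abs_real_inner_le_norm _ _
  have hJ := hlow q
  have e1 : -(δ / 2) * T ^ 2 * t ^ 2 = -t ^ 2 := by
    rw [hδ2]; field_simp
  have hJbound : Γ ^ 2 / T ^ 2 * s ^ 2 ≤ δ * (T ^ 2 - T₀ ^ 2) * (J q - J xstar) := by
    rw [hδ2, hΓsq]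
    have h1 : (0:ℝ) ≤ 2 / T ^ 2 * (T ^ 2 - T₀ ^ 2) := by positivity
    calc (T ^ 2 - T₀ ^ 2) * κJ / T ^ 2 * s ^ 2
        = 2 / T ^ 2 * (T ^ 2 - T₀ ^ 2) * (κJ / 2 * s ^ 2) := by ring
      _ ≤ 2 / T ^ 2 * (T ^ 2 - T₀ ^ 2) * (J q - J xstar) :=
          mul_le_mul_of_nonneg_left hJ h1
  have hid : 2 * η / Γ * t ^ 2 + 2 * η * Γ / T ^ 2 * s ^ 2 - 4 * η / T * (s * t)
      = 2 * η / (T ^ 2 * Γ) * (Γ * s - T * t) ^ 2 := by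
    field_simp
    ring
  have hnn : (0:ℝ) ≤ 2 * η / (T ^ 2 * Γ) * (Γ * s - T * t) ^ 2 := by positivity
  have hyoung : 4 * η / T * (s * t) ≤ 2 * η / Γ * t ^ 2 + 2 * η * Γ / T ^ 2 * s ^ 2 := by
    linarith [hid, hnn]
  have hinner3 : -(4 * η / T * ⟪q - xstar, p⟫) ≤ 4 * η / T * (s * t) := by
    have h1 : -⟪q - xstar, p⟫ ≤ s * t := by
      have := neg_abs_le (⟪q - xstar, p⟫ : ℝ)
      linarith [habs]
    have h2 : (0:ℝ) ≤ 4 * η / T := by positivity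
    calc -(4 * η / T * ⟪q - xstar, p⟫) = 4 * η / T * (-⟪q - xstar, p⟫) := by ring
      _ ≤ 4 * η / T * (s * t) := mul_le_mul_of_nonneg_left h1 h2
  have hgoal : -(1 - 2 * η / Γ) * t ^ 2 - Γ * (Γ - 2 * η) / T ^ 2 * s ^ 2
      = -t ^ 2 + 2 * η / Γ * t ^ 2 - Γ ^ 2 / T ^ 2 * s ^ 2 + 2 * η * Γ / T ^ 2 * s ^ 2 := by
    ring
  rw [hgoal]
  linarith [e1, hJbound, hyoung, hinner3]
end

section
/- Consider the flow dynamics q̇ = p, ṗ = −(3/τ)p − G(q), τ̇ = η with τ ∈ [T₀, T], η ∈ (0,1), where G = ∇J + R, J is κ_J-strongly convex, ⟨q − x*, R(q)⟩ ≥ 0, R(x*) = 0, and R is ℓ_K-Lipschitz. Let V be the Lyapunov function with coefficients a, b, c, δ as defined above and λ = min{2c(3−η), aκ_J/b}, T̄ = 2 min{3(1−η), κ_J η}/ℓ_K. If T < T̄, then the time derivative of V along the flow satisfies V̇ ≤ −λτ(1 − T/T̄)(|p|² + |q − x*|²) < 0 for (q, p) ≠ (x*, 0). -/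
open RealInnerProductSpace

private lemma hasDerivAt_norm_sq' {n : ℕ} {f : ℝ → EuclideanSpace ℝ (Fin n)}
    {f' : EuclideanSpace ℝ (Fin n)} {t : ℝ} (hf : HasDerivAt f f' t) :
    HasDerivAt (fun s => ‖f s‖ ^ 2) (2 * ⟪f t, f'⟫) t := by
  have h := hf.inner ℝ hf
  have heq : (fun s => ‖f s‖ ^ 2) = fun s => (⟪f s, f s⟫ : ℝ) := by
    funext s; rw [real_inner_self_eq_norm_sq]
  rw [heq]
  have e : (2 * ⟪f t, f'⟫ : ℝ) = ⟪f t, f'⟫ + ⟪f', f t⟫ := by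
    rw [real_inner_comm f' (f t)]; ring
  rw [e]; exact h

set_option maxHeartbeats 4000000 in
theorem stmt_14 (n : ℕ) (J : EuclideanSpace ℝ (Fin n) → ℝ)
    (gJ R G : EuclideanSpace ℝ (Fin n) → EuclideanSpace ℝ (Fin n))
    (xstar : EuclideanSpace ℝ (Fin n))
    (κJ ℓK η T₀ T : ℝ) (hκ : 0 < κJ) (hℓK : 0 < ℓK)
    (hη : η ∈ Set.Ioo (0 : ℝ) 1) (hT₀ : 0 < T₀) (hT₀T : T₀ < T)
    (hgrad : ∀ q, HasGradientAt J (gJ q) q)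
    (hG : ∀ q, G q = gJ q + R q)
    (hstrong : ∀ q, (κJ / 2) * ‖q - xstar‖ ^ 2 ≤ ⟪gJ q, q - xstar⟫ - (J q - J xstar))
    (hRmono : ∀ q, (0 : ℝ) ≤ ⟪q - xstar, R q⟫)
    (hRstar : R xstar = 0)
    (hRLip : ∀ x₁ x₂, ‖R x₁ - R x₂‖ ≤ ℓK * ‖x₁ - x₂‖) :
    let b : ℝ := 3 - η
    let a : ℝ := 2 * η * b / T ^ 2
    let c : ℝ := 3 * a * (1 - η) / (2 * η * b ^ 2)
    let δ : ℝ := a / (η * b)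
    let V : EuclideanSpace ℝ (Fin n) → EuclideanSpace ℝ (Fin n) → ℝ → ℝ :=
      fun q p τ => a * ‖q + (τ / b) • p - xstar‖ ^ 2 + c * τ ^ 2 * ‖p‖ ^ 2
        + δ * τ ^ 2 * (J q - J xstar)
    let lam : ℝ := min (2 * c * (3 - η)) (a * κJ / b)
    let Tbar : ℝ := 2 * min (3 * (1 - η)) (κJ * η) / ℓK
    T < Tbar →
    ∀ (qf pf : ℝ → EuclideanSpace ℝ (Fin n)) (τf : ℝ → ℝ) (t : ℝ),
      HasDerivAt qf (pf t) t →
      HasDerivAt pf (-((3 / τf t) • pf t) - G (qf t)) t →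
      HasDerivAt τf η t →
      τf t ∈ Set.Icc T₀ T →
      ∃ d : ℝ, HasDerivAt (fun s => V (qf s) (pf s) (τf s)) d t ∧
        d ≤ -(lam * τf t * (1 - T / Tbar)) * (‖pf t‖ ^ 2 + ‖qf t - xstar‖ ^ 2) ∧
        ((qf t, pf t) ≠ (xstar, 0) → d < 0) := by
  intro b a c δ V lam Tbar hTTbar qf pf τf t hq hp hτ hτmem
  obtain ⟨hη0, hη1⟩ := hη
  obtain ⟨hτlo, hτhi⟩ := hτmem
  have hb_def : b = 3 - η := rfl
  have ha_def : a = 2 * η * b / T ^ 2 := rfl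
  have hc_def : c = 3 * a * (1 - η) / (2 * η * b ^ 2) := rfl
  have hδ_def : δ = a / (η * b) := rfl
  have hlam_def : lam = min (2 * c * (3 - η)) (a * κJ / b) := rfl
  have hTbar_def : Tbar = 2 * min (3 * (1 - η)) (κJ * η) / ℓK := rfl
  have hV_def : V = fun q p τ => a * ‖q + (τ / b) • p - xstar‖ ^ 2 + c * τ ^ 2 * ‖p‖ ^ 2
        + δ * τ ^ 2 * (J q - J xstar) := rfl
  clear_value b a c δ V lam Tbar
  have hT : 0 < T := hT₀.trans hT₀T
  have hτpos : 0 < τf t := lt_of_lt_of_le hT₀ hτlo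
  have hbpos : (0 : ℝ) < b := by rw [hb_def]; linarith
  have hbne : b ≠ 0 := ne_of_gt hbpos
  have hηne : η ≠ 0 := ne_of_gt hη0
  have hTne : T ≠ 0 := ne_of_gt hT
  have hapos : 0 < a := by rw [ha_def]; positivity
  have hcpos : 0 < c := by
    rw [hc_def]
    have h1 : 0 < 1 - η := by linarith
    positivity
  have hδT : δ = 2 / T ^ 2 := by
    rw [hδ_def, ha_def]
    field_simp
  have hδpos : 0 < δ := by rw [hδT]; positivity
  set q : EuclideanSpace ℝ (Fin n) := qf t with hqdef
  set p : EuclideanSpace ℝ (Fin n) := pf t with hpdef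
  set τ : ℝ := τf t with hτdef
  have hτne : τ ≠ 0 := ne_of_gt hτpos
  set p' : EuclideanSpace ℝ (Fin n) := -((3 / τ) • p) - G q with hp'def
  -- scalar abbreviations
  set A : ℝ := ⟪gJ q, q - xstar⟫ with hA
  set B : ℝ := ⟪q - xstar, R q⟫ with hB
  set Cc : ℝ := ⟪gJ q, p⟫ with hCc
  set D : ℝ := ⟪p, R q⟫ with hD
  set P : ℝ := ‖p‖ ^ 2 with hPd
  set Q : ℝ := ‖q - xstar‖ ^ 2 with hQd
  set ΔJ : ℝ := J q - J xstar with hΔJ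
  -- derivative of w := q + (τ/b)•p - xstar
  have h1 : HasDerivAt (fun s => τf s / b) (η / b) t := hτ.div_const b
  have h2 : HasDerivAt (fun s => (τf s / b) • pf s) ((τ / b) • p' + (η / b) • p) t :=
    h1.smul hp
  have hw : HasDerivAt (fun s => qf s + (τf s / b) • pf s - xstar)
      (p + ((τ / b) • p' + (η / b) • p)) t := (hq.add h2).sub_const xstar
  have hwd : p + ((τ / b) • p' + (η / b) • p) = -((τ / b) • G q) := by
    have h3η : (3 : ℝ) - η ≠ 0 := hb_def ▸ hbne
    rw [hp'def, hb_def]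
    match_scalars <;> field_simp [hτne, h3η] <;> ring
  rw [hwd] at hw
  have hw2 : HasDerivAt (fun s => ‖qf s + (τf s / b) • pf s - xstar‖ ^ 2)
      (2 * ⟪q + (τ / b) • p - xstar, -((τ / b) • G q)⟫) t := hasDerivAt_norm_sq' hw
  have hP2 : HasDerivAt (fun s => ‖pf s‖ ^ 2) (2 * ⟪p, p'⟫) t := hasDerivAt_norm_sq' hp
  have hτ2 : HasDerivAt (fun s => τf s ^ 2) ((2 : ℝ) * τ ^ 1 * η) t := hτ.pow 2
  have hJ : HasDerivAt (fun s => J (qf s) - J xstar) Cc t := by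
    have h := ((hgrad q).hasFDerivAt.comp_hasDerivAt t hq).sub_const (J xstar)
    rw [hCc]
    simpa using h
  set E : ℝ := a * (2 * ⟪q + (τ / b) • p - xstar, -((τ / b) • G q)⟫)
       + c * (((2 : ℝ) * τ ^ 1 * η) * P + τ ^ 2 * (2 * ⟪p, p'⟫))
       + δ * (((2 : ℝ) * τ ^ 1 * η) * ΔJ + τ ^ 2 * Cc) with hE
  have hVt : HasDerivAt (fun s => V (qf s) (pf s) (τf s)) E t := by
    have hfun : (fun s => V (qf s) (pf s) (τf s))
        = fun s => a * ‖qf s + (τf s / b) • pf s - xstar‖ ^ 2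
          + c * (τf s ^ 2 * ‖pf s‖ ^ 2) + δ * (τf s ^ 2 * (J (qf s) - J xstar)) := by
      funext s; rw [hV_def]; ring
    rw [hfun, hE]
    exact ((hw2.const_mul a).add ((hτ2.mul hP2).const_mul c)).add
      ((hτ2.mul hJ).const_mul δ)
  -- compute inner products
  have hiw : (⟪q + (τ / b) • p - xstar, -((τ / b) • G q)⟫ : ℝ)
      = -((τ / b) * ((A + B) + (τ / b) * (Cc + D))) := by
    have hsplit : q + (τ / b) • p - xstar = (q - xstar) + (τ / b) • p := by abel
    have hcomm1 : (⟪q - xstar, gJ q⟫ : ℝ) = A := by rw [hA, real_inner_comm]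
    have hcomm2 : (⟪p, gJ q⟫ : ℝ) = Cc := by rw [hCc, real_inner_comm]
    rw [hsplit, hG, inner_neg_right, real_inner_smul_right, inner_add_left,
      real_inner_smul_left, inner_add_right, inner_add_right,
      hcomm1, hcomm2, ← hB, ← hD]
  have hip : (⟪p, p'⟫ : ℝ) = -(3 / τ) * P - (Cc + D) := by
    have hcomm2 : (⟪p, gJ q⟫ : ℝ) = Cc := by rw [hCc, real_inner_comm]
    rw [hp'def, hG, inner_sub_right, inner_neg_right, real_inner_smul_right,
      inner_add_right, hcomm2, ← hD, real_inner_self_eq_norm_sq, ← hPd]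
    ring
  clear_value A B Cc D P Q ΔJ E q p τ p'
  have hd_eq : E = -(2 * a * τ / b) * (A - ΔJ) - (2 * a * τ / b) * B
      - 2 * c * b * τ * P - δ * τ ^ 2 * D := by
    rw [hE, hiw, hip, hc_def, hδ_def, ha_def, hb_def]
    have h3η : (3 : ℝ) - η ≠ 0 := by rw [← hb_def]; exact hbne
    field_simp
    ring
  -- basic inequalities
  have F1 : κJ / 2 * Q ≤ A - ΔJ := by rw [hQd, hA, hΔJ]; exact hstrong q
  have F2 : (0 : ℝ) ≤ B := by rw [hB]; exact hRmono q
  have F3 : -D ≤ ℓK * (P + Q) / 2 := by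
    have h1 : |D| ≤ ‖p‖ * ‖R q‖ := by rw [hD]; exact abs_real_inner_le_norm p (R q)
    have h2 : ‖R q‖ ≤ ℓK * ‖q - xstar‖ := by
      have := hRLip q xstar
      rwa [hRstar, sub_zero] at this
    have h3 : ‖p‖ * ‖R q‖ ≤ ℓK * (‖p‖ * ‖q - xstar‖) :=
      calc ‖p‖ * ‖R q‖ ≤ ‖p‖ * (ℓK * ‖q - xstar‖) :=
            mul_le_mul_of_nonneg_left h2 (norm_nonneg p)
        _ = ℓK * (‖p‖ * ‖q - xstar‖) := by ring
    have h4 : ‖p‖ * ‖q - xstar‖ ≤ (P + Q) / 2 := by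
      rw [hPd, hQd]
      linarith [two_mul_le_add_sq ‖p‖ ‖q - xstar‖]
    have h5 : -D ≤ |D| := neg_le_abs D
    have h6 : ℓK * (‖p‖ * ‖q - xstar‖) ≤ ℓK * ((P + Q) / 2) :=
      mul_le_mul_of_nonneg_left h4 hℓK.le
    calc -D ≤ |D| := h5
      _ ≤ ‖p‖ * ‖R q‖ := h1
      _ ≤ ℓK * (‖p‖ * ‖q - xstar‖) := h3
      _ ≤ ℓK * ((P + Q) / 2) := h6
      _ = ℓK * (P + Q) / 2 := by ring
  clear hw hwd hw2 hP2 hτ2 hJ hiw hip h1 h2 hq hp hτ hE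
  have h1η : (0 : ℝ) < 1 - η := by linarith
  have hm : 0 < min (3 * (1 - η)) (κJ * η) :=
    lt_min (mul_pos (by norm_num) h1η) (mul_pos hκ hη0)
  have hTbarpos : 0 < Tbar := by rw [hTbar_def]; positivity
  have e3 : 2 * c * (3 - η) = 6 * (1 - η) / T ^ 2 := by
    rw [← hb_def, hc_def, ha_def]
    field_simp
    ring
  have e4 : a * κJ / b = 2 * η * κJ / T ^ 2 := by
    rw [ha_def]
    field_simp
  have hlamval : lam = 2 * min (3 * (1 - η)) (κJ * η) / T ^ 2 := by
    rw [hlam_def, e3, e4]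
    rcases le_total (3 * (1 - η)) (κJ * η) with h | h
    · have h2 : 6 * (1 - η) / T ^ 2 ≤ 2 * η * κJ / T ^ 2 :=
        div_le_div_of_nonneg_right (by linarith) (by positivity)
      rw [min_eq_left h2, min_eq_left h]
      ring
    · have h2 : 2 * η * κJ / T ^ 2 ≤ 6 * (1 - η) / T ^ 2 :=
        div_le_div_of_nonneg_right (by linarith) (by positivity)
      rw [min_eq_right h2, min_eq_right h]
      ring
  have hlampos : 0 < lam := by rw [hlamval]; positivity
  have hkey : lam * T ^ 2 = ℓK * Tbar := by
    rw [hlamval, hTbar_def]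
    field_simp
  have hfrac : ℓK / T = lam * (T / Tbar) := by
    have hTbne : Tbar ≠ 0 := ne_of_gt hTbarpos
    field_simp
    first
    | linear_combination hkey
    | linear_combination -hkey
    | linear_combination T * hkey
    | linear_combination -(T * hkey)
    | linarith [hkey]
  have hPnn : (0 : ℝ) ≤ P := by rw [hPd]; positivity
  have hQnn : (0 : ℝ) ≤ Q := by rw [hQd]; positivity
  -- main bound
  have hle : E ≤ -(lam * τ * (1 - T / Tbar)) * (P + Q) := by
    have hpos1 : (0 : ℝ) < 2 * a * τ / b := by positivity
    have k1 : -(2 * a * τ / b) * (A - ΔJ) ≤ -(a * κJ * τ / b) * Q := by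
      have h := mul_le_mul_of_nonneg_left F1 hpos1.le
      have heq : 2 * a * τ / b * (κJ / 2 * Q) = -(-(a * κJ * τ / b) * Q) := by ring
      have heq2 : 2 * a * τ / b * (A - ΔJ) = -(-(2 * a * τ / b) * (A - ΔJ)) := by ring
      rw [heq, heq2] at h
      linarith
    have k2 : -(2 * a * τ / b) * B ≤ 0 := by
      have h := mul_nonneg hpos1.le F2
      linarith [h, (by ring : -(2 * a * τ / b) * B = -(2 * a * τ / b * B))]
    have k3 : -(δ * τ ^ 2 * D) ≤ lam * (T / Tbar) * τ * (P + Q) := by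
      rw [← hfrac, hδT]
      have s1 : (0 : ℝ) ≤ ℓK * (P + Q) := by positivity
      have s2 : 2 * τ ^ 2 * (-D) ≤ 2 * τ ^ 2 * (ℓK * (P + Q) / 2) :=
        mul_le_mul_of_nonneg_left F3 (by positivity)
      have hττ : τ ^ 2 ≤ τ * T := by rw [pow_two]; exact mul_le_mul_of_nonneg_left hτhi hτpos.le
      have s3 : τ ^ 2 * (ℓK * (P + Q)) ≤ τ * T * (ℓK * (P + Q)) :=
        mul_le_mul_of_nonneg_right hττ s1
      have hnum : 0 ≤ ℓK * τ * T * (P + Q) + 2 * τ ^ 2 * D := by linarith [s2, s3]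
      have hkey2 : ℓK / T * τ * (P + Q) - -(2 / T ^ 2 * τ ^ 2 * D)
          = (ℓK * τ * T * (P + Q) + 2 * τ ^ 2 * D) / T ^ 2 := by
        field_simp
        ring
      have hdiv : (0 : ℝ) ≤ (ℓK * τ * T * (P + Q) + 2 * τ ^ 2 * D) / T ^ 2 :=
        div_nonneg hnum (by positivity)
      linarith [hkey2, hdiv]
    have k4 : -(2 * c * b * τ * P) ≤ -(lam * τ * P) := by
      have hl1 : lam ≤ 2 * c * b := by
        rw [hlam_def, hb_def]; exact min_le_left _ _
      have h := mul_le_mul_of_nonneg_right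
        (mul_le_mul_of_nonneg_right hl1 hτpos.le) hPnn
      linarith [h]
    have k5 : -(a * κJ * τ / b) * Q ≤ -(lam * τ * Q) := by
      have hl2 : lam ≤ a * κJ / b := by rw [hlam_def]; exact min_le_right _ _
      have h := mul_le_mul_of_nonneg_right
        (mul_le_mul_of_nonneg_right hl2 hτpos.le) hQnn
      have h3 : -(a * κJ * τ / b) * Q = -(a * κJ / b * τ * Q) := by ring
      rw [h3]
      linarith [h]
    have hfin : -(lam * τ * P) + -(lam * τ * Q) + lam * (T / Tbar) * τ * (P + Q)
        = -(lam * τ * (1 - T / Tbar)) * (P + Q) := by ring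
    rw [hd_eq]
    linarith [k1, k2, k3, k4, k5, hfin]
  refine ⟨E, hVt, hle, ?_⟩
  intro hne
  have hSpos : 0 < P + Q := by
    have hor : q ≠ xstar ∨ p ≠ 0 := by
      by_contra h
      push_neg at h
      exact hne (Prod.ext_iff.mpr ⟨h.1, h.2⟩)
    rcases hor with h | h
    · have h1 : 0 < Q := by
        rw [hQd]
        exact pow_pos (norm_pos_iff.mpr (sub_ne_zero_of_ne h)) 2
      linarith
    · have h1 : 0 < P := by
        rw [hPd]
        exact pow_pos (norm_pos_iff.mpr h) 2
      linarith
  have hcoefpos : 0 < lam * τ * (1 - T / Tbar) := by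
    have : T / Tbar < 1 := (div_lt_one hTbarpos).mpr hTTbar
    have h1 : 0 < 1 - T / Tbar := by linarith
    positivity
  have hneg : -(lam * τ * (1 - T / Tbar)) * (P + Q) < 0 := by
    have := mul_pos hcoefpos hSpos
    linarith
  linarith [hle]
end

section
/- Consider the scalar Nesterov-type linear system in ℝ⁴: dy/ds = Ay + ε B(εs) y, with A = [[0, I₂], [−I₂, 0]] and B(τ) = [[0, 0], [−Q̂_a, −(3/(τ + T₀))I₂]] where Q̂_a = α[[0, 1], [−1, 0]], α ∈ (0,1]. The time-averaged constant part B̄₁ = (1/𝒯)∫₀^𝒯 e^{−As}[[0,0],[−Q̂_a,0]]e^{As} ds over the period 𝒯 = 2π of e^{As} equals (1/2)[[0, Q̂_a],[−Q̂_a, 0]], whose spectrum contains the real positive eigenvalue α/2. Hence the averaged system dζ/ds = εB̄₁ζ is unstable at the origin. -/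
open Matrix Real

abbrev MX := Matrix (Fin 2 ⊕ Fin 2) (Fin 2 ⊕ Fin 2) ℝ

noncomputable def Amat : MX := Matrix.fromBlocks 0 1 (-1) 0

lemma Amat_sq : Amat * Amat = -1 := by
  rw [Amat, Matrix.fromBlocks_multiply]
  simp [← Matrix.fromBlocks_one, Matrix.fromBlocks_neg]

noncomputable def phiA : ℂ →ₐ[ℝ] MX where
  toFun z := z.re • (1 : MX) + z.im • Amat
  map_one' := by simp
  map_mul' z w := by
    have h := Amat_sq
    simp only [add_mul, mul_add, smul_mul_assoc, mul_smul_comm, smul_smul, one_mul, mul_one,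
      Complex.mul_re, Complex.mul_im, h, smul_neg]
    module
  map_zero' := by simp
  map_add' z w := by
    simp only [Complex.add_re, Complex.add_im, add_smul]
    abel
  commutes' r := by
    simp [Algebra.algebraMap_eq_smul_one]

lemma phiA_cont : Continuous phiA := by
  show Continuous fun z : ℂ => z.re • (1 : MX) + z.im • Amat
  fun_prop

lemma exp_smul_Amat (s : ℝ) :
    NormedSpace.exp (s • Amat) = Real.cos s • (1 : MX) + Real.sin s • Amat := by
  letI : SeminormedRing MX := Matrix.linftyOpSemiNormedRing
  letI : NormedRing MX := Matrix.linftyOpNormedRing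
  letI : NormedAlgebra ℝ MX := Matrix.linftyOpNormedAlgebra
  have h1 : (s • Amat) = phiA ((s : ℂ) * Complex.I) := by
    rw [show ∀ z, phiA z = z.re • (1 : MX) + z.im • Amat from fun _ => rfl]
    simp
  erw [h1, ← NormedSpace.map_exp phiA phiA_cont]
  have h2 : NormedSpace.exp ((s : ℂ) * Complex.I) = Complex.exp ((s : ℂ) * Complex.I) := by
    rw [Complex.exp_eq_exp_ℂ]
  rw [h2, show ∀ z, phiA z = z.re • (1 : MX) + z.im • Amat from fun _ => rfl,
    Complex.exp_ofReal_mul_I_re, Complex.exp_ofReal_mul_I_im]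

lemma mem_spectrum_of_eig {n : Type*} [Fintype n] [DecidableEq n] (M : Matrix n n ℂ) (μ : ℂ)
    (v : n → ℂ) (hv : v ≠ 0) (h : M *ᵥ v = μ • v) : μ ∈ spectrum ℂ M := by
  rw [spectrum.mem_iff]
  intro hu
  obtain ⟨u, hu⟩ := hu
  apply hv
  have h0 : (algebraMap ℂ (Matrix n n ℂ) μ - M) *ᵥ v = 0 := by
    rw [Matrix.sub_mulVec, h, Algebra.algebraMap_eq_smul_one, Matrix.smul_mulVec,
      Matrix.one_mulVec, sub_self]
  have h1 : v = ((↑u⁻¹ : Matrix n n ℂ) * (↑u : Matrix n n ℂ)) *ᵥ v := by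
    rw [Units.inv_mul, Matrix.one_mulVec]
  rw [h1, ← Matrix.mulVec_mulVec, hu, h0, Matrix.mulVec_zero]

theorem stmt_19 (α : ℝ) (hα : α ∈ Set.Ioc (0 : ℝ) 1) :
    let Qa : Matrix (Fin 2) (Fin 2) ℝ := α • !![0, 1; -1, 0]
    let A : Matrix (Fin 2 ⊕ Fin 2) (Fin 2 ⊕ Fin 2) ℝ := Matrix.fromBlocks 0 1 (-1) 0
    let B1 : Matrix (Fin 2 ⊕ Fin 2) (Fin 2 ⊕ Fin 2) ℝ := Matrix.fromBlocks 0 0 (-Qa) 0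
    let Bbar : Matrix (Fin 2 ⊕ Fin 2) (Fin 2 ⊕ Fin 2) ℝ :=
      (1/2 : ℝ) • Matrix.fromBlocks 0 Qa (-Qa) 0
    (∀ i j : Fin 2 ⊕ Fin 2,
      (1 / (2 * π)) * ∫ s in (0 : ℝ)..(2 * π),
        (NormedSpace.exp ((-s) • A) * B1 * NormedSpace.exp (s • A)) i j
      = Bbar i j) ∧
    ((α / 2 : ℝ) : ℂ) ∈ spectrum ℂ (Bbar.map (algebraMap ℝ ℂ)) ∧
    (∀ ε : ℝ, 0 < ε → ∃ z ∈ spectrum ℂ ((ε • Bbar).map (algebraMap ℝ ℂ)), 0 < z.re) := by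
  intro Qa A B1 Bbar
  have hA : A = Amat := rfl
  -- block products
  have hC2 : B1 * A - A * B1 = Matrix.fromBlocks Qa 0 0 (-Qa) := by
    show Matrix.fromBlocks 0 0 (-Qa) 0 * Matrix.fromBlocks 0 1 (-1) 0
        - Matrix.fromBlocks 0 1 (-1) 0 * Matrix.fromBlocks 0 0 (-Qa) 0 = _
    rw [Matrix.fromBlocks_multiply, Matrix.fromBlocks_multiply]
    simp only [sub_eq_add_neg, Matrix.fromBlocks_neg, Matrix.fromBlocks_add]
    simp
  have hC3 : A * B1 * A = Matrix.fromBlocks 0 (-Qa) 0 0 := by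
    show Matrix.fromBlocks 0 1 (-1) 0 * Matrix.fromBlocks 0 0 (-Qa) 0
        * Matrix.fromBlocks 0 1 (-1) 0 = _
    rw [Matrix.fromBlocks_multiply, Matrix.fromBlocks_multiply]
    simp
  have hC13 : B1 - A * B1 * A = Matrix.fromBlocks 0 Qa (-Qa) 0 := by
    rw [hC3]
    show Matrix.fromBlocks 0 0 (-Qa) 0 - _ = _
    rw [sub_eq_add_neg, Matrix.fromBlocks_neg, Matrix.fromBlocks_add]
    simp
  have hprod : ∀ s : ℝ, NormedSpace.exp ((-s) • A) * B1 * NormedSpace.exp (s • A)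
      = (cos s)^2 • B1 + (sin s * cos s) • (B1 * A - A * B1) - (sin s)^2 • (A * B1 * A) := by
    intro s
    rw [hA]
    have e1 : NormedSpace.exp (s • Amat) = Real.cos s • (1 : MX) + Real.sin s • Amat :=
      exp_smul_Amat s
    have e2 : NormedSpace.exp ((-s) • Amat) = Real.cos s • (1 : MX) - Real.sin s • Amat := by
      rw [exp_smul_Amat (-s), Real.cos_neg, Real.sin_neg, neg_smul, sub_eq_add_neg]
    rw [e1, e2]
    simp only [sub_mul, mul_sub, add_mul, mul_add, smul_mul_assoc, mul_smul_comm, one_mul,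
      mul_one, smul_smul, smul_sub, smul_add]
    module
  have hBd : Bbar = (1/2 : ℝ) • Matrix.fromBlocks 0 (α • !![0, 1; -1, 0])
      (-(α • !![0, 1; -1, 0])) 0 := rfl
  set v : Fin 2 ⊕ Fin 2 → ℂ := Sum.elim ![1, Complex.I] ![-Complex.I, 1] with hvdef
  have hvne : v ≠ 0 := by
    intro h0
    have := congrFun h0 (Sum.inl 0)
    simp [hvdef] at this
  have heig : (Bbar.map (algebraMap ℝ ℂ)) *ᵥ v = ((α/2 : ℝ) : ℂ) • v := by
    rw [hBd]
    funext k
    rcases k with k | k <;> fin_cases k <;>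
      · simp [hvdef, Matrix.mulVec, dotProduct, Fintype.sum_sum_type,
          Matrix.map_apply, Matrix.smul_apply, smul_eq_mul]
        ring
  refine ⟨?_, ?_, ?_⟩
  · intro i j
    have key : ∀ s ∈ Set.uIcc (0:ℝ) (2*π),
        (NormedSpace.exp ((-s) • A) * B1 * NormedSpace.exp (s • A)) i j
        = cos s ^ 2 * B1 i j + sin s * cos s * ((B1 * A - A * B1) i j)
          - sin s ^ 2 * ((A * B1 * A) i j) := by
      intro s _
      rw [hprod s]
      simp [mul_assoc]
    rw [intervalIntegral.integral_congr key]
    have i1 : IntervalIntegrable (fun s => cos s ^ 2 * B1 i j) MeasureTheory.volume 0 (2*π) :=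
      (by fun_prop : Continuous fun s => cos s ^ 2 * B1 i j).intervalIntegrable _ _
    have i2 : IntervalIntegrable (fun s => sin s * cos s * ((B1 * A - A * B1) i j))
        MeasureTheory.volume 0 (2*π) :=
      (by fun_prop : Continuous fun s => sin s * cos s * ((B1 * A - A * B1) i j)).intervalIntegrable _ _
    have i3 : IntervalIntegrable (fun s => sin s ^ 2 * ((A * B1 * A) i j))
        MeasureTheory.volume 0 (2*π) :=
      (by fun_prop : Continuous fun s => sin s ^ 2 * ((A * B1 * A) i j)).intervalIntegrable _ _
    rw [intervalIntegral.integral_sub (i1.add i2) i3, intervalIntegral.integral_add i1 i2,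
      intervalIntegral.integral_mul_const, intervalIntegral.integral_mul_const,
      intervalIntegral.integral_mul_const, integral_cos_sq, integral_sin_sq,
      integral_sin_mul_cos₁]
    have hent : (Matrix.fromBlocks 0 Qa (-Qa) 0 : Matrix (Fin 2 ⊕ Fin 2) (Fin 2 ⊕ Fin 2) ℝ) i j
        = B1 i j - (A * B1 * A) i j := by
      rw [← hC13, Matrix.sub_apply]
    have hBbar : Bbar i j = (1/2) * (B1 i j - (A * B1 * A) i j) := by
      rw [← hent]
      simp [Bbar]
    rw [hBbar]
    rw [Real.sin_two_pi, Real.cos_two_pi, Real.sin_zero, Real.cos_zero]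
    have hpi := Real.pi_ne_zero
    field_simp
    ring
  · exact mem_spectrum_of_eig _ _ v hvne heig
  · intro ε hε
    refine ⟨((ε * (α/2) : ℝ) : ℂ), ?_, ?_⟩
    · apply mem_spectrum_of_eig _ _ v hvne
      have hsc : ((ε • Bbar).map (algebraMap ℝ ℂ)) = (ε : ℂ) • (Bbar.map (algebraMap ℝ ℂ)) := by
        ext i j
        simp [Matrix.map_apply, Matrix.smul_apply, smul_eq_mul]
      rw [hsc, Matrix.smul_mulVec, heig, smul_smul]
      push_cast
      ring_nf
    · rw [Complex.ofReal_re]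
      have := hα.1
      positivity
end
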